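/- arXiv:1702.08023 — 2 statements merged into one kernel-verified Lean document; each statement's English description precedes it below -/
import Mathlib

section
/- Let M be a finite monoid and let P ⊆ M be cyclic. Then P satisfies the two conditions (S1) for every idempotent e ∈ M and all u, v ∈ M, u·e·v ∈ P implies e ∈ P, and (S2) for every x ∈ M and n ≥ 1 with xⁿ idempotent, xⁿ ∈ P iff x ∈ P, if and only if P is upward closed on idempotents for the J-preorder: for all idempotents e, f of M, e ∈ P and e ≤_J f imply f ∈ P. -/
/-- A subset `P` of a monoid is cyclic if it is closed under powers and roots
(`uⁿ ∈ P ↔ u ∈ P` for `n > 0`) and under conjugation (`uv ∈ P ↔ vu ∈ P`). -/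
def IsCyclicSet {M : Type*} [Monoid M] (P : Set M) : Prop :=
  (∀ u : M, ∀ n : ℕ, 0 < n → (u ^ n ∈ P ↔ u ∈ P)) ∧
  (∀ u v : M, u * v ∈ P ↔ v * u ∈ P)

/-- Green's `J`-preorder: `s ≤_J t` iff `s = u t v` for some `u, v`. -/
def leJ {M : Type*} [Monoid M] (s t : M) : Prop :=
  ∃ u v : M, s = u * t * v

/-- In a finite monoid, some positive power of every element is idempotent. -/
lemma exists_pow_idem {M : Type*} [Monoid M] [Fintype M] (x : M) :
    ∃ n : ℕ, 1 ≤ n ∧ IsIdempotentElem (x ^ n) := by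
  obtain ⟨a, b, hne, hab⟩ :=
    Finite.exists_ne_map_eq_of_infinite (fun n : ℕ => x ^ n)
  wlog hlt : a < b generalizing a b
  · exact this b a hne.symm hab.symm (by omega)
  set d := b - a with hd
  have hd0 : 0 < d := by omega
  have key : ∀ k m : ℕ, a ≤ m → x ^ (m + k * d) = x ^ m := by
    intro k
    induction k with
    | zero => simp
    | succ k ih =>
      intro m hm
      have h1 : x ^ (m + d) = x ^ m := by
        have h2 : m + d = (m - a) + b := by omega
        rw [h2, pow_add, ← hab, ← pow_add]
        congr 1
        omega
      calc x ^ (m + (k+1) * d) = x ^ ((m + d) + k * d) := by ring_nf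
        _ = x ^ (m + d) := ih (m + d) (by omega)
        _ = x ^ m := h1
  refine ⟨(a + 1) * d, Nat.mul_pos (by omega) hd0, ?_⟩
  have := key (a + 1) ((a + 1) * d) (by nlinarith)
  unfold IsIdempotentElem
  rw [← pow_add]
  exact this

/-- Let `P` be a cyclic subset of a finite monoid `M`. Then `P` satisfies
conditions (S1) and (S2) if and only if `P` is upward closed on idempotents for
the `J`-preorder: `e ∈ P` and `e ≤_J f` imply `f ∈ P` for idempotents `e, f`. -/
theorem S1_S2_iff_upward_on_idempotents {M : Type*} [Monoid M] [Fintype M]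
    (P : Set M) (hcyc : IsCyclicSet P) :
    ((∀ e u v : M, IsIdempotentElem e → u * e * v ∈ P → e ∈ P) ∧
      (∀ x : M, ∀ n : ℕ, 1 ≤ n → IsIdempotentElem (x ^ n) → (x ^ n ∈ P ↔ x ∈ P))) ↔
    (∀ e f : M, IsIdempotentElem e → IsIdempotentElem f → e ∈ P → leJ e f → f ∈ P) := by
  obtain ⟨hpow, hconj⟩ := hcyc
  constructor
  · rintro ⟨hS1, -⟩ e f he hf heP ⟨u, v, huv⟩
    exact hS1 f u v hf (huv ▸ heP)
  · intro hup
    constructor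
    · intro e u v he huev
      have hevu : e * v * u ∈ P := by
        exact (hconj u (e * v)).mp (by rwa [← mul_assoc])
      obtain ⟨k, hk1, hk⟩ := exists_pow_idem (e * v * u)
      have hg : (e * v * u) ^ k ∈ P := (hpow _ k hk1).mpr hevu
      have this' : ∀ m : ℕ, (e * v * u) ^ (m + 1) = e * (v * (u * e)) ^ m * (v * u) := by
        intro m
        induction m with
        | zero => simp [mul_assoc]
        | succ m ih =>
          rw [pow_succ, ih, pow_succ]
          simp [mul_assoc]
      refine hup ((e * v * u) ^ k) e hk he hg ⟨1, (v * (u * e)) ^ (k - 1) * (v * u), ?_⟩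
      have hk' : k = (k - 1) + 1 := by omega
      conv_lhs => rw [hk']
      rw [this' (k - 1), one_mul, mul_assoc]
    · intro x n hn _
      exact hpow x n hn
end

section
/- In a finite monoid M, any two J-equivalent idempotents are conjugate: if e and f are idempotent elements of M with e ≤_J f and f ≤_J e, then there exist x, y ∈ M such that xy = e and yx = f. -/
section aux

variable {M : Type*} [Monoid M]

/-- In a finite monoid every element has an idempotent positive power. -/
lemma exists_pow_idem_s19 [Fintype M] (a : M) :
    ∃ n : ℕ, 0 < n ∧ a ^ n * a ^ n = a ^ n := by
  obtain ⟨m, n, hlt, h⟩ : ∃ m n : ℕ, m < n ∧ a ^ m = a ^ n := by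
    obtain ⟨m, n, hne, h⟩ := Finite.exists_ne_map_eq_of_infinite (fun k : ℕ => a ^ k)
    rcases hne.lt_or_gt with hmn | hmn
    · exact ⟨m, n, hmn, h⟩
    · exact ⟨n, m, hmn, h.symm⟩
  obtain ⟨r, hrpos, hrn⟩ : ∃ r : ℕ, 0 < r ∧ n = m + r := ⟨n - m, by omega, by omega⟩
  have hmr : a ^ (m + r) = a ^ m := by rw [← hrn]; exact h.symm
  have hstep : ∀ j, m ≤ j → a ^ (j + r) = a ^ j := by
    intro j hj
    obtain ⟨d, rfl⟩ := Nat.exists_eq_add_of_le hj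
    calc a ^ (m + d + r) = a ^ (m + r) * a ^ d := by
          rw [← pow_add]; congr 1; omega
      _ = a ^ m * a ^ d := by rw [hmr]
      _ = a ^ (m + d) := by rw [← pow_add]
  have hiter : ∀ t, a ^ ((m + 1) * r + t * r) = a ^ ((m + 1) * r) := by
    intro t
    induction t with
    | zero => simp
    | succ t ih =>
      have hle : m ≤ (m + 1) * r + t * r := by nlinarith
      calc a ^ ((m + 1) * r + (t + 1) * r)
          = a ^ ((m + 1) * r + t * r + r) := by congr 1; ring
        _ = a ^ ((m + 1) * r + t * r) := hstep _ hle
        _ = a ^ ((m + 1) * r) := ih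
  refine ⟨(m + 1) * r, by positivity, ?_⟩
  calc a ^ ((m + 1) * r) * a ^ ((m + 1) * r) = a ^ ((m + 1) * r + (m + 1) * r) := by
        rw [pow_add]
    _ = a ^ ((m + 1) * r) := hiter (m + 1)

lemma lemA (a b e : M) (ha : a * e = a) (hab : e = a * e * b) {n : ℕ} (hn : 0 < n)
    (hid : a ^ n * a ^ n = a ^ n) : a ^ n = e := by
  have key : ∀ k, e = a ^ k * e * b ^ k := by
    intro k
    induction k with
    | zero => simp
    | succ k ih =>
      calc e = a * e * b := hab
        _ = a * (a ^ k * e * b ^ k) * b := by rw [← ih]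
        _ = a ^ (k + 1) * e * b ^ (k + 1) := by rw [pow_succ', pow_succ]; group
  obtain ⟨k, rfl⟩ : ∃ k, n = k + 1 := ⟨n - 1, by omega⟩
  have hane : a ^ (k + 1) * e = a ^ (k + 1) := by
    rw [pow_succ, mul_assoc, ha]
  calc a ^ (k + 1) = a ^ (k + 1) * e := hane.symm
    _ = a ^ (k + 1) * (a ^ (k + 1) * e * b ^ (k + 1)) := by rw [← key (k + 1)]
    _ = (a ^ (k + 1) * a ^ (k + 1)) * e * b ^ (k + 1) := by group
    _ = a ^ (k + 1) * e * b ^ (k + 1) := by rw [hid]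
    _ = e := (key (k + 1)).symm

lemma pow_swap (p u : M) (m : ℕ) : (p * u) ^ (m + 1) = p * (u * p) ^ m * u := by
  induction m with
  | zero => simp
  | succ m ih =>
    calc (p * u) ^ (m + 1 + 1) = (p * u) * (p * u) ^ (m + 1) := by rw [← pow_succ']
      _ = p * u * (p * (u * p) ^ m * u) := by rw [ih]
      _ = p * ((u * p) * (u * p) ^ m) * u := by group
      _ = p * (u * p) ^ (m + 1) * u := by rw [← pow_succ']

lemma lemB (p u e f : M) {n k : ℕ} (hn : 0 < n) (hk : 0 < k)
    (hup : (u * p) ^ n = e) (hpe : p * e = p) (heu : e * u = u)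
    (hf : f * f = f) (hkf : (p * u) ^ k = f) : (p * u) ^ n = f := by
  obtain ⟨m, rfl⟩ : ∃ m, n = m + 1 := ⟨n - 1, by omega⟩
  have h1 : (p * u) ^ (m + 1 + 1) = p * u := by
    calc (p * u) ^ (m + 1 + 1) = p * (u * p) ^ (m + 1) * u := pow_swap p u (m + 1)
      _ = p * e * u := by rw [hup]
      _ = p * u := by rw [hpe]
  have hper : ∀ j, (p * u) ^ (j + 1 + (m + 1)) = (p * u) ^ (j + 1) := by
    intro j
    calc (p * u) ^ (j + 1 + (m + 1)) = (p * u) ^ j * (p * u) ^ (m + 1 + 1) := by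
          rw [← pow_add]; congr 1; omega
      _ = (p * u) ^ j * (p * u) := by rw [h1]
      _ = (p * u) ^ (j + 1) := (pow_succ _ _).symm
  have hjn : ∀ j, 0 < j → (p * u) ^ (j * (m + 1)) = (p * u) ^ (m + 1) := by
    intro j hj
    induction j with
    | zero => exact absurd hj (lt_irrefl 0)
    | succ j ih =>
      rcases Nat.eq_zero_or_pos j with rfl | hjpos
      · simp
      · obtain ⟨i, hi⟩ : ∃ i, j * (m + 1) = i + 1 :=
          ⟨j * (m + 1) - 1, by have : 0 < j * (m + 1) := Nat.mul_pos hjpos (by omega); omega⟩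
        calc (p * u) ^ ((j + 1) * (m + 1)) = (p * u) ^ (j * (m + 1) + (m + 1)) := by
              congr 1; ring
          _ = (p * u) ^ (i + 1 + (m + 1)) := by rw [hi]
          _ = (p * u) ^ (i + 1) := hper i
          _ = (p * u) ^ (j * (m + 1)) := by rw [hi]
          _ = (p * u) ^ (m + 1) := ih hjpos
  have hfn : ∀ t, f ^ (t + 1) = f := by
    intro t
    induction t with
    | zero => simp
    | succ t ih => rw [pow_succ, ih, hf]
  calc (p * u) ^ (m + 1) = (p * u) ^ (k * (m + 1)) := (hjn k hk).symm
    _ = ((p * u) ^ k) ^ (m + 1) := (pow_mul _ _ _)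
    _ = f ^ (m + 1) := by rw [hkf]
    _ = f := hfn m

end aux

/-- In a finite monoid, two `J`-equivalent idempotents are conjugate: there are
`x, y` with `xy = e` and `yx = f`. -/
theorem jEquiv_idempotents_conjugate {M : Type*} [Monoid M] [Fintype M]
    (e f : M) (he : IsIdempotentElem e) (hf : IsIdempotentElem f)
    (hef : leJ e f) (hfe : leJ f e) :
    ∃ x y : M, x * y = e ∧ y * x = f := by
  obtain ⟨u0, v0, hu0⟩ := hef
  obtain ⟨p0, q0, hp0⟩ := hfe
  unfold IsIdempotentElem at he hf
  have he' : ∀ x : M, e * (e * x) = e * x := fun x => by rw [← mul_assoc, he]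
  have hf' : ∀ x : M, f * (f * x) = f * x := fun x => by rw [← mul_assoc, hf]
  have hu0' : ∀ x : M, u0 * (f * (v0 * x)) = e * x := fun x => by
    simp only [← mul_assoc]; rw [← hu0]
  have hp0' : ∀ x : M, p0 * (e * (q0 * x)) = f * x := fun x => by
    simp only [← mul_assoc]; rw [← hp0]
  set u := e * u0 * f with hu
  set v := f * v0 * e with hv
  set p := f * p0 * e with hp
  set q := e * q0 * f with hq
  have heufv : u * f * v = e := by
    rw [hu, hv]
    simp only [mul_assoc]
    rw [hf', hf', hu0', he', he]
  have hfpeq : p * e * q = f := by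
    rw [hp, hq]
    simp only [mul_assoc]
    rw [he', he', hp0', hf', hf]
  have hpe : p * e = p := by rw [hp, mul_assoc, he]
  have heu : e * u = u := by rw [hu, ← mul_assoc, ← mul_assoc, he]
  have huf : u * f = u := by rw [hu, mul_assoc, mul_assoc, hf, ← mul_assoc]
  -- e = (u*p) * e * (q*v)
  have hA : e = (u * p) * e * (q * v) := by
    calc e = u * f * v := heufv.symm
      _ = u * (p * e * q) * v := by rw [hfpeq]
      _ = (u * p) * e * (q * v) := by group
  have hAe : (u * p) * e = u * p := by rw [mul_assoc, hpe]
  obtain ⟨n, hnpos, hnid⟩ := exists_pow_idem_s19 (u * p)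
  have hupn : (u * p) ^ n = e := lemA (u * p) (q * v) e hAe hA hnpos hnid
  -- f = (p*u) * f * (v*q)
  have hB : f = (p * u) * f * (v * q) := by
    calc f = p * e * q := hfpeq.symm
      _ = p * (u * f * v) * q := by rw [heufv]
      _ = (p * u) * f * (v * q) := by group
  have hBf : (p * u) * f = p * u := by rw [mul_assoc, huf]
  obtain ⟨k, hkpos, hkid⟩ := exists_pow_idem_s19 (p * u)
  have hpuk : (p * u) ^ k = f := lemA (p * u) (v * q) f hBf hB hkpos hkid
  have hpun : (p * u) ^ n = f := lemB p u e f hnpos hkpos hupn hpe heu hf hpuk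
  obtain ⟨m, rfl⟩ : ∃ m, n = m + 1 := ⟨n - 1, by omega⟩
  refine ⟨u, p * (u * p) ^ m, ?_, ?_⟩
  · calc u * (p * (u * p) ^ m) = (u * p) * (u * p) ^ m := by group
      _ = (u * p) ^ (m + 1) := (pow_succ' _ _).symm
      _ = e := hupn
  · calc (p * (u * p) ^ m) * u = p * (u * p) ^ m * u := by group
      _ = (p * u) ^ (m + 1) := (pow_swap p u m).symm
      _ = f := hpun
end
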